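/- If (X₁, X₂) is a centered Gaussian vector and Y₁, Y₂ are independent centered Gaussians with E[Xᵢ²] = E[Yᵢ²] for i = 1, 2, then E[min(|X₁|, |X₂|)] ≥ E[min(|Y₁|, |Y₂|)]. -/

import Mathlib

open MeasureTheory ProbabilityTheory Real
open scoped NNReal

/-! Since `min |a| |b| = |a| + |b| - (|a + b| + |a - b|) / 2` and `E|Z| = c √(Var Z)` for a centered
Gaussian `Z`, with `c = E|N(0, 1)|`, the expectation `E min(|Z₁|, |Z₂|)` for either pair equals
`c (√v₁ + √v₂ - (√Var(Z₁ + Z₂) + √Var(Z₁ - Z₂)) / 2)`, where `vᵢ = Var Zᵢ`.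
By the parallelogram law `Var(Z₁ + Z₂) + Var(Z₁ - Z₂) = 2 (v₁ + v₂)` in either case; for
independent `Y` the two variances are equal, which by concavity of `√` maximises
`√Var(Z₁ + Z₂) + √Var(Z₁ - Z₂)`. -/

lemma min_abs_eq_add_sub_half (x y : ℝ) :
    min |x| |y| = |x| + |y| - (|x + y| + |x - y|) / 2 := by
  rcases le_total |x| |y| with h | h <;>
    [rw [min_eq_left h]; rw [min_eq_right h]] <;>
    cases abs_cases x <;> cases abs_cases y <;> cases abs_cases (x + y) <;>
    cases abs_cases (x - y) <;> linarith

lemma sqrt_add_sqrt_le_two_mul_sqrt {a b s : ℝ} (ha : 0 ≤ a) (hb : 0 ≤ b) (h : a + b = 2 * s) :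
    √a + √b ≤ 2 * √s := by
  have hs : 0 ≤ s := by linarith
  nlinarith [sq_sqrt ha, sq_sqrt hb, sq_sqrt hs, sq_nonneg (√a - √b), sqrt_nonneg a,
    sqrt_nonneg b, sqrt_nonneg s]

lemma ProbabilityTheory.variance_add_add_variance_sub {Ω : Type*} [MeasurableSpace Ω]
    {μ : Measure Ω} [IsFiniteMeasure μ] {X Y : Ω → ℝ} (hX : MemLp X 2 μ) (hY : MemLp Y 2 μ) :
    Var[fun ω ↦ X ω + Y ω; μ] + Var[fun ω ↦ X ω - Y ω; μ] = 2 * (Var[X; μ] + Var[Y; μ]) := by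
  rw [variance_fun_add hX hY, variance_fun_sub hX hY]
  ring

lemma integral_abs_gaussianReal (v : ℝ≥0) :
    ∫ x, |x| ∂gaussianReal 0 v = √v * ∫ x, |x| ∂gaussianReal 0 1 := by
  have hscale : gaussianReal 0 v = (gaussianReal 0 1).map (fun x ↦ √v * x) := by
    rw [gaussianReal_map_const_mul]
    congr
    · simp
    · ext; simp
  rw [hscale, integral_map (by fun_prop) (by fun_prop)]
  simp only [abs_mul, abs_of_nonneg (sqrt_nonneg _), integral_const_mul]

namespace ProbabilityTheory.HasLaw

variable {Ω 𝓧 : Type*} [MeasurableSpace Ω] [MeasurableSpace 𝓧] {P : Measure Ω}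

/-- `Measure.map` sends a function that is not a.e.-measurable to `0`, so the equation
`P.map X = μ` alone already carries the measurability of `X`. -/
lemma of_map_eq {X : Ω → 𝓧} {μ : Measure 𝓧} [NeZero μ] (h : P.map X = μ) : HasLaw X μ P :=
  ⟨.of_map_ne_zero (h ▸ NeZero.ne μ), h⟩

variable {Z : Ω → ℝ} {v : ℝ≥0}

lemma memLp_two_of_gaussianReal (hZ : HasLaw Z (gaussianReal 0 v) P) : MemLp Z 2 P := by
  have := memLp_id_gaussianReal (μ := 0) (v := v) 2
  rw [← hZ.map_eq, memLp_map_measure_iff aestronglyMeasurable_id hZ.aemeasurable] at this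
  exact_mod_cast this

lemma variance_of_gaussianReal (hZ : HasLaw Z (gaussianReal 0 v) P) : Var[Z; P] = v := by
  rw [hZ.variance_eq, variance_id_gaussianReal]

lemma integral_sq_of_gaussianReal (hZ : HasLaw Z (gaussianReal 0 v) P) :
    ∫ ω, Z ω ^ 2 ∂P = v := by
  have hmean : P[Z] = 0 := by rw [hZ.integral_eq, integral_id_gaussianReal]
  rw [← variance_of_integral_eq_zero hZ.aemeasurable hmean, hZ.variance_of_gaussianReal]

lemma integrable_abs_of_gaussianReal (hZ : HasLaw Z (gaussianReal 0 v) P) :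
    Integrable (fun ω ↦ |Z ω|) P := by
  have := hZ.isProbabilityMeasure
  exact (hZ.memLp_two_of_gaussianReal.integrable one_le_two).abs

lemma integral_abs_of_gaussianReal (hZ : HasLaw Z (gaussianReal 0 v) P) :
    ∫ ω, |Z ω| ∂P = √v * ∫ x, |x| ∂gaussianReal 0 1 := by
  rw [← integral_abs_gaussianReal, ← hZ.integral_comp (f := fun x ↦ |x|) (by fun_prop)]
  rfl

end ProbabilityTheory.HasLaw

section

variable {Ω : Type*} [MeasurableSpace Ω] {P : Measure Ω} {Z₁ Z₂ : Ω → ℝ} {v₁ v₂ : ℝ≥0}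

lemma ProbabilityTheory.IndepFun.hasLaw_add_gaussianReal (hind : IndepFun Z₁ Z₂ P)
    {m₁ m₂ : ℝ} (h₁ : HasLaw Z₁ (gaussianReal m₁ v₁) P) (h₂ : HasLaw Z₂ (gaussianReal m₂ v₂) P) :
    HasLaw (fun ω ↦ Z₁ ω + Z₂ ω) (gaussianReal (m₁ + m₂) (v₁ + v₂)) P :=
  gaussianReal_conv_gaussianReal ▸ hind.hasLaw_fun_add h₁ h₂

lemma ProbabilityTheory.IndepFun.hasLaw_sub_gaussianReal (hind : IndepFun Z₁ Z₂ P)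
    {m₁ m₂ : ℝ} (h₁ : HasLaw Z₁ (gaussianReal m₁ v₁) P) (h₂ : HasLaw Z₂ (gaussianReal m₂ v₂) P) :
    HasLaw (fun ω ↦ Z₁ ω - Z₂ ω) (gaussianReal (m₁ - m₂) (v₁ + v₂)) P := by
  have hneg : HasLaw (fun ω ↦ -Z₂ ω) (gaussianReal (-m₂) v₂) P :=
    HasLaw.fun_comp ⟨by fun_prop, gaussianReal_map_neg⟩ h₂
  simpa only [sub_eq_add_neg, Function.comp_def, id] using
    (hind.comp measurable_id measurable_neg).hasLaw_add_gaussianReal h₁ hneg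

lemma integral_min_abs_of_hasLaw_gaussianReal {vp vm : ℝ≥0}
    (h₁ : HasLaw Z₁ (gaussianReal 0 v₁) P) (h₂ : HasLaw Z₂ (gaussianReal 0 v₂) P)
    (hp : HasLaw (fun ω ↦ Z₁ ω + Z₂ ω) (gaussianReal 0 vp) P)
    (hm : HasLaw (fun ω ↦ Z₁ ω - Z₂ ω) (gaussianReal 0 vm) P) :
    ∫ ω, min |Z₁ ω| |Z₂ ω| ∂P = (√v₁ + √v₂ - (√vp + √vm) / 2) * ∫ x, |x| ∂gaussianReal 0 1 := by
  simp_rw [min_abs_eq_add_sub_half]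
  have i₁ := h₁.integrable_abs_of_gaussianReal
  have i₂ := h₂.integrable_abs_of_gaussianReal
  have ip := hp.integrable_abs_of_gaussianReal
  have im := hm.integrable_abs_of_gaussianReal
  have iZ : Integrable (fun ω ↦ |Z₁ ω| + |Z₂ ω|) P := i₁.add i₂
  have iZpm : Integrable (fun ω ↦ (|Z₁ ω + Z₂ ω| + |Z₁ ω - Z₂ ω|) / 2) P :=
    (ip.add im).div_const 2
  rw [integral_sub iZ iZpm, integral_add i₁ i₂, integral_div,
    integral_add ip im, h₁.integral_abs_of_gaussianReal, h₂.integral_abs_of_gaussianReal,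
    hp.integral_abs_of_gaussianReal, hm.integral_abs_of_gaussianReal]
  ring

end

theorem stmt_14_general {Ω : Type*} [MeasurableSpace Ω] (P : Measure Ω) [IsProbabilityMeasure P]
    (X₁ X₂ Y₁ Y₂ : Ω → ℝ)
    (hXgauss : ∀ c d : ℝ, ∃ v : NNReal,
      Measure.map (fun ω => c * X₁ ω + d * X₂ ω) P = gaussianReal 0 v)
    (hYindep : IndepFun Y₁ Y₂ P)
    (hY₁ : ∃ v : NNReal, Measure.map Y₁ P = gaussianReal 0 v)
    (hY₂ : ∃ v : NNReal, Measure.map Y₂ P = gaussianReal 0 v)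
    (hvar₁ : ∫ ω, (X₁ ω) ^ 2 ∂P = ∫ ω, (Y₁ ω) ^ 2 ∂P)
    (hvar₂ : ∫ ω, (X₂ ω) ^ 2 ∂P = ∫ ω, (Y₂ ω) ^ 2 ∂P) :
    ∫ ω, min (|X₁ ω|) (|X₂ ω|) ∂P ≥ ∫ ω, min (|Y₁ ω|) (|Y₂ ω|) ∂P := by
  have hX (c d : ℝ) : ∃ v : ℝ≥0, HasLaw (fun ω ↦ c * X₁ ω + d * X₂ ω) (gaussianReal 0 v) P :=
    (hXgauss c d).imp fun _ ↦ HasLaw.of_map_eq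
  obtain ⟨v₁, hX₁⟩ := hX 1 0
  obtain ⟨v₂, hX₂⟩ := hX 0 1
  obtain ⟨vp, hXp⟩ := hX 1 1
  obtain ⟨vm, hXm⟩ := hX 1 (-1)
  simp only [one_mul, zero_mul, add_zero, zero_add, neg_one_mul, ← sub_eq_add_neg]
    at hX₁ hX₂ hXp hXm
  obtain ⟨u₁, hY₁⟩ := hY₁.imp fun _ ↦ HasLaw.of_map_eq
  obtain ⟨u₂, hY₂⟩ := hY₂.imp fun _ ↦ HasLaw.of_map_eq
  obtain rfl : v₁ = u₁ := by
    rw [hX₁.integral_sq_of_gaussianReal, hY₁.integral_sq_of_gaussianReal] at hvar₁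
    exact_mod_cast hvar₁
  obtain rfl : v₂ = u₂ := by
    rw [hX₂.integral_sq_of_gaussianReal, hY₂.integral_sq_of_gaussianReal] at hvar₂
    exact_mod_cast hvar₂
  have hparallelogram : (vp + vm : ℝ) = 2 * (v₁ + v₂) := by
    have := variance_add_add_variance_sub hX₁.memLp_two_of_gaussianReal
      hX₂.memLp_two_of_gaussianReal
    rwa [hX₁.variance_of_gaussianReal, hX₂.variance_of_gaussianReal,
      hXp.variance_of_gaussianReal, hXm.variance_of_gaussianReal] at this
  rw [integral_min_abs_of_hasLaw_gaussianReal hX₁ hX₂ hXp hXm,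
    integral_min_abs_of_hasLaw_gaussianReal hY₁ hY₂
      (by simpa using hYindep.hasLaw_add_gaussianReal hY₁ hY₂)
      (by simpa using hYindep.hasLaw_sub_gaussianReal hY₁ hY₂)]
  have hconcave := sqrt_add_sqrt_le_two_mul_sqrt vp.coe_nonneg vm.coe_nonneg hparallelogram
  refine mul_le_mul_of_nonneg_right ?_ (integral_nonneg fun _ ↦ abs_nonneg _)
  push_cast
  linarith

theorem stmt_14 {Ω : Type*} [MeasurableSpace Ω] (P : Measure Ω) [IsProbabilityMeasure P]
    (X₁ X₂ Y₁ Y₂ : Ω → ℝ)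
    (hmX₁ : Measurable X₁) (hmX₂ : Measurable X₂)
    (hmY₁ : Measurable Y₁) (hmY₂ : Measurable Y₂)
    (hXgauss : ∀ c d : ℝ, ∃ v : NNReal,
      Measure.map (fun ω => c * X₁ ω + d * X₂ ω) P = gaussianReal 0 v)
    (hYindep : IndepFun Y₁ Y₂ P)
    (hY₁ : ∃ v : NNReal, Measure.map Y₁ P = gaussianReal 0 v)
    (hY₂ : ∃ v : NNReal, Measure.map Y₂ P = gaussianReal 0 v)
    (hvar₁ : ∫ ω, (X₁ ω) ^ 2 ∂P = ∫ ω, (Y₁ ω) ^ 2 ∂P)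
    (hvar₂ : ∫ ω, (X₂ ω) ^ 2 ∂P = ∫ ω, (Y₂ ω) ^ 2 ∂P) :
    ∫ ω, min (|X₁ ω|) (|X₂ ω|) ∂P ≥ ∫ ω, min (|Y₁ ω|) (|Y₂ ω|) ∂P :=
  stmt_14_general P X₁ X₂ Y₁ Y₂ hXgauss hYindep hY₁ hY₂ hvar₁ hvar₂
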